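/- arXiv:2009.11535 — 4 statements merged into one kernel-verified Lean document; each statement's English description precedes it below -/
import Mathlib

section
/- For all real numbers a, b ≥ 0 and every α ≥ 1, one has (a^(2α-1) + b^(2α-1))·|a - b| ≤ |a^α - b^α|·(a^α + b^α). -/
/-! With `p = 2α - 1`, the right-hand side is `|a ^ (p + 1) - b ^ (p + 1)|`. For `b ≤ a`,
expanding `(a ^ p + b ^ p) * (a - b)` leaves `a ^ (p + 1) - b ^ (p + 1)` minus
`b * a ^ p - a * b ^ p = a * b * (a ^ (p - 1) - b ^ (p - 1))`, which is nonnegative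
because `x ↦ x ^ (p - 1)` is monotone for `p ≥ 1`. -/

namespace Real

variable {a b p : ℝ}

lemma mul_rpow_le_mul_rpow_of_le (hb : 0 ≤ b) (hba : b ≤ a) (hp : 1 ≤ p) :
    a * b ^ p ≤ b * a ^ p := by
  have ha : 0 ≤ a := hb.trans hba
  obtain ⟨q, hq, rfl⟩ : ∃ q, 0 ≤ q ∧ p = q + 1 := ⟨p - 1, by linarith, by ring⟩
  have hq1 : q + 1 ≠ 0 := by linarith
  rw [rpow_add_one' hb hq1, rpow_add_one' ha hq1]
  have hmono : b ^ q ≤ a ^ q := rpow_le_rpow hb hba hq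
  nlinarith [mul_nonneg ha hb]

lemma rpow_add_rpow_mul_sub_le_of_le (hb : 0 ≤ b) (hba : b ≤ a) (hp : 1 ≤ p) :
    (a ^ p + b ^ p) * (a - b) ≤ a ^ (p + 1) - b ^ (p + 1) := by
  have hp1 : p + 1 ≠ 0 := by linarith
  rw [rpow_add_one' (hb.trans hba) hp1, rpow_add_one' hb hp1]
  nlinarith [mul_rpow_le_mul_rpow_of_le hb hba hp]

lemma rpow_add_rpow_mul_abs_sub_le (ha : 0 ≤ a) (hb : 0 ≤ b) (hp : 1 ≤ p) :
    (a ^ p + b ^ p) * |a - b| ≤ |a ^ (p + 1) - b ^ (p + 1)| := by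
  rcases le_total b a with hba | hab
  · rw [abs_of_nonneg (sub_nonneg.2 hba)]
    exact (rpow_add_rpow_mul_sub_le_of_le hb hba hp).trans (le_abs_self _)
  · rw [abs_sub_comm, abs_sub_comm (a ^ (p + 1)), add_comm, abs_of_nonneg (sub_nonneg.2 hab)]
    exact (rpow_add_rpow_mul_sub_le_of_le ha hab hp).trans (le_abs_self _)

lemma abs_rpow_sub_rpow_mul_rpow_add_rpow (ha : 0 ≤ a) (hb : 0 ≤ b) (α : ℝ) :
    |a ^ α - b ^ α| * (a ^ α + b ^ α) = |a ^ (2 * α) - b ^ (2 * α)| := by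
  have hsq : ∀ x : ℝ, 0 ≤ x → x ^ (2 * α) = (x ^ α) ^ 2 := fun x hx => by
    rw [mul_comm, ← Nat.cast_ofNat, rpow_mul_natCast hx]
  rw [hsq a ha, hsq b hb, sq_sub_sq, abs_mul, mul_comm,
    abs_of_nonneg (add_nonneg (rpow_nonneg ha α) (rpow_nonneg hb α))]

end Real

theorem stmt_0 (a b : ℝ) (ha : 0 ≤ a) (hb : 0 ≤ b) (α : ℝ) (hα : 1 ≤ α) :
    (a ^ (2 * α - 1) + b ^ (2 * α - 1)) * |a - b| ≤
      |a ^ α - b ^ α| * (a ^ α + b ^ α) := by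
  have h := Real.rpow_add_rpow_mul_abs_sub_le ha hb (p := 2 * α - 1) (by linarith)
  rwa [sub_add_cancel, ← Real.abs_rpow_sub_rpow_mul_rpow_add_rpow ha hb] at h
end

section
/- For all real numbers a, b ≥ 0 and every real α > 1/2, one has (a^α - b^α)^2 ≤ (α^2/(2α-1))·(a - b)·(a^(2α-1) - b^(2α-1)). -/
/-!
Write `b ^ α - a ^ α = α ∫_a^b x ^ (α - 1) dx` and
`b ^ (2α - 1) - a ^ (2α - 1) = (2α - 1) ∫_a^b x ^ (2α - 2) dx`; the inequality is then the
Cauchy–Schwarz inequality `(∫_a^b f)² ≤ (b - a) ∫_a^b f²` for `f x = x ^ (α - 1)`.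
-/

open MeasureTheory Set

theorem sq_integral_le_measureReal_univ_mul_integral_sq {X : Type*} [MeasurableSpace X]
    {μ : Measure X} [IsFiniteMeasure μ] {f : X → ℝ} (hf : Integrable f μ)
    (hf2 : Integrable (fun x ↦ f x ^ 2) μ) :
    (∫ x, f x ∂μ) ^ 2 ≤ μ.real univ * ∫ x, f x ^ 2 ∂μ := by
  -- `t ↦ ∫ (f - t)²` is a nonnegative quadratic, so its discriminant is nonpositive.
  have hquad : ∀ t : ℝ,
      0 ≤ μ.real univ * (t * t) + (-2 * ∫ x, f x ∂μ) * t + ∫ x, f x ^ 2 ∂μ := by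
    intro t
    have hexpand : ∫ x, (f x - t) ^ 2 ∂μ =
        μ.real univ * (t * t) + (-2 * ∫ x, f x ∂μ) * t + ∫ x, f x ^ 2 ∂μ := by
      have hcross : Integrable (fun x ↦ 2 * f x * t) μ := (hf.const_mul 2).mul_const t
      have hdiff : Integrable (fun x ↦ f x ^ 2 - 2 * f x * t) μ := hf2.sub hcross
      simp_rw [sub_sq]
      rw [integral_add hdiff (integrable_const _), integral_sub hf2 hcross, integral_mul_const,
        integral_const_mul, integral_const, smul_eq_mul]
      ring
    exact hexpand ▸ integral_nonneg fun x ↦ sq_nonneg _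
  have := discrim_le_zero hquad
  rw [discrim] at this
  linarith

theorem sq_intervalIntegral_le_mul_intervalIntegral_sq {f : ℝ → ℝ} {a b : ℝ} (hab : a ≤ b)
    (hf : IntervalIntegrable f volume a b)
    (hf2 : IntervalIntegrable (fun x ↦ f x ^ 2) volume a b) :
    (∫ x in a..b, f x) ^ 2 ≤ (b - a) * ∫ x in a..b, f x ^ 2 := by
  have := sq_integral_le_measureReal_univ_mul_integral_sq hf.1 hf2.1
  rwa [measureReal_restrict_apply_univ, Real.volume_real_Ioc_of_le hab,
    ← intervalIntegral.integral_of_le hab, ← intervalIntegral.integral_of_le hab] at this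

theorem sq_rpow_sub_rpow_le_of_le {a b α : ℝ} (hb : 0 ≤ b) (hba : b ≤ a) (hα : 1 / 2 < α) :
    (a ^ α - b ^ α) ^ 2 ≤
      α ^ 2 / (2 * α - 1) * ((a - b) * (a ^ (2 * α - 1) - b ^ (2 * α - 1))) := by
  have hsq : EqOn (fun x : ℝ ↦ (x ^ (α - 1)) ^ 2) (fun x ↦ x ^ (2 * α - 2)) (uIcc b a) := by
    intro x hx
    rw [uIcc_of_le hba] at hx
    dsimp only
    rw [← Real.rpow_mul_natCast (hb.trans hx.1)]
    ring_nf
  have hint : IntervalIntegrable (fun x : ℝ ↦ x ^ (α - 1)) volume b a :=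
    intervalIntegral.intervalIntegrable_rpow' (by linarith)
  have hint2 : IntervalIntegrable (fun x : ℝ ↦ (x ^ (α - 1)) ^ 2) volume b a :=
    (intervalIntegral.intervalIntegrable_rpow' (by linarith)).congr_uIoo
      (hsq.symm.mono uIoo_subset_uIcc_self)
  have hI1 : ∫ x in b..a, x ^ (α - 1) = (a ^ α - b ^ α) / α := by
    rw [integral_rpow (Or.inl (by linarith)), sub_add_cancel]
  have hI2 : ∫ x in b..a, (x ^ (α - 1)) ^ 2 =
      (a ^ (2 * α - 1) - b ^ (2 * α - 1)) / (2 * α - 1) := by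
    rw [intervalIntegral.integral_congr hsq, integral_rpow (Or.inl (by linarith)),
      show 2 * α - 2 + 1 = 2 * α - 1 by ring]
  have hcs := sq_intervalIntegral_le_mul_intervalIntegral_sq hba hint hint2
  rw [hI1, hI2] at hcs
  have hα0 : α ≠ 0 := (by linarith : 0 < α).ne'
  calc (a ^ α - b ^ α) ^ 2 = α ^ 2 * ((a ^ α - b ^ α) / α) ^ 2 := by field_simp
    _ ≤ α ^ 2 * ((a - b) * ((a ^ (2 * α - 1) - b ^ (2 * α - 1)) / (2 * α - 1))) := by gcongr
    _ = _ := by ring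

theorem stmt_1 (a b : ℝ) (ha : 0 ≤ a) (hb : 0 ≤ b) (α : ℝ) (hα : 1 / 2 < α) :
    (a ^ α - b ^ α) ^ 2 ≤
      α ^ 2 / (2 * α - 1) * ((a - b) * (a ^ (2 * α - 1) - b ^ (2 * α - 1))) := by
  rcases le_total b a with hba | hab
  · exact sq_rpow_sub_rpow_le_of_le hb hba hα
  · convert sq_rpow_sub_rpow_le_of_le ha hab hα using 1 <;> ring
end

section
/- Define g : (0,∞) → ℝ by g(z) = -log z for z ∈ (0, c̄], g(z) = (z-1)²/(2c̄(1-c̄)) for z ∈ (c̄, 1], and g(z) = 0 for z ≥ 1, where c̄ ∈ [1/4, 1/3] is the smallest solution of 2c·log(1/c) = 1 - c. Then g is nonnegative, non-increasing, and convex on (0,∞). -/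
/-!
The function `g` is `C¹` on `(0, ∞)`: its derivative is `-1/z` on `(0, c]`, the line
`(z - 1) / (c (1 - c))` on `[c, 1]` and `0` on `[1, ∞)`. The slopes agree at `c` by the choice
of the quadratic coefficient, the values agree at `c` exactly because `c` solves
`2c log (1/c) = 1 - c`, and both pieces vanish to first order at `1`. This derivative is
nondecreasing and nonpositive, so `g` is convex and nonincreasing; it is nonnegative piece by
piece.
-/

open Real Set

lemma hasDerivAt_ite_le {f₁ f₂ : ℝ → ℝ} {a x d₁ d₂ : ℝ}
    (h₁ : x ≤ a → HasDerivAt f₁ d₁ x) (h₂ : a ≤ x → HasDerivAt f₂ d₂ x)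
    (hval : f₁ a = f₂ a) (hderiv : x = a → d₁ = d₂) :
    HasDerivAt (fun y => if y ≤ a then f₁ y else f₂ y) (if x ≤ a then d₁ else d₂) x := by
  rcases lt_trichotomy x a with hxa | rfl | hax
  · rw [if_pos hxa.le]
    refine (h₁ hxa.le).congr_of_eventuallyEq ?_
    filter_upwards [Iio_mem_nhds hxa] with y hy
    exact if_pos (le_of_lt hy)
  · rw [if_pos le_rfl]
    have hleft : HasDerivWithinAt (fun y => if y ≤ x then f₁ y else f₂ y) d₁ (Iic x) x :=
      (h₁ le_rfl).hasDerivWithinAt.congr (fun y hy => if_pos hy) (if_pos le_rfl)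
    have hright : HasDerivWithinAt (fun y => if y ≤ x then f₁ y else f₂ y) d₁ (Ici x) x := by
      rw [hderiv rfl]
      refine (h₂ le_rfl).hasDerivWithinAt.congr (fun y (hy : x ≤ y) => ?_) (by simp [hval])
      split_ifs with hyx
      · rw [le_antisymm hyx hy, hval]
      · rfl
    simpa only [Iic_union_Ici, hasDerivWithinAt_univ] using hleft.union hright
  · rw [if_neg hax.not_ge]
    refine (h₂ hax.le).congr_of_eventuallyEq ?_
    filter_upwards [Ioi_mem_nhds hax] with y hy
    exact if_neg (not_le.2 hy)

lemma monotoneOn_ite_le {α β : Type*} [LinearOrder α] [Preorder β] {s : Set α} {f₁ f₂ : α → β}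
    {a : α} (hs : s.OrdConnected) (h₁ : MonotoneOn f₁ (s ∩ Iic a))
    (h₂ : MonotoneOn f₂ (s ∩ Ici a)) (ha : f₁ a ≤ f₂ a) :
    MonotoneOn (fun x => if x ≤ a then f₁ x else f₂ x) s := by
  intro x hx y hy hxy
  dsimp only
  split_ifs with hxa hya hya
  · exact h₁ ⟨hx, hxa⟩ ⟨hy, hya⟩ hxy
  · have has : a ∈ s := hs.out hx hy ⟨hxa, (not_le.1 hya).le⟩
    exact (h₁ ⟨hx, hxa⟩ ⟨has, le_rfl⟩ hxa).trans
      (ha.trans (h₂ ⟨has, le_rfl⟩ ⟨hy, (not_le.1 hya).le⟩ (not_le.1 hya).le))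
  · exact absurd (hxy.trans hya) hxa
  · exact h₂ ⟨hx, (not_le.1 hxa).le⟩ ⟨hy, (not_le.1 hya).le⟩ hxy

lemma MonotoneOn.convexOn_of_hasDerivAt {D : Set ℝ} {f f' : ℝ → ℝ} (hf' : MonotoneOn f' D)
    (hD : Convex ℝ D) (hDo : IsOpen D) (hf : ∀ x ∈ D, HasDerivAt f (f' x) x) :
    ConvexOn ℝ D f := by
  refine MonotoneOn.convexOn_of_deriv hD (fun x hx => (hf x hx).continuousAt.continuousWithinAt)
    ?_ ?_ <;> rw [hDo.interior_eq]
  · exact fun x hx => (hf x hx).differentiableAt.differentiableWithinAt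
  · exact hf'.congr fun x hx => (hf x hx).deriv.symm

lemma antitoneOn_of_hasDerivAt_nonpos {D : Set ℝ} {f f' : ℝ → ℝ} (hD : Convex ℝ D)
    (hDo : IsOpen D) (hf : ∀ x ∈ D, HasDerivAt f (f' x) x) (hf' : ∀ x ∈ D, f' x ≤ 0) :
    AntitoneOn f D := by
  refine antitoneOn_of_hasDerivWithinAt_nonpos (f' := f') hD
    (fun x hx => (hf x hx).continuousAt.continuousWithinAt) ?_ ?_ <;> rw [hDo.interior_eq]
  · exact fun x hx => (hf x hx).hasDerivWithinAt
  · exact hf'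

lemma sub_one_div_mul_one_sub {c : ℝ} (hc0 : c ≠ 0) (hc1 : c ≠ 1) :
    (c - 1) / (c * (1 - c)) = -c⁻¹ := by
  field_simp [sub_ne_zero.2 hc1.symm]
  ring

/-- The function `g`, with the splicing point `c` as a parameter. -/
noncomputable def splicedNegLog (c : ℝ) : ℝ → ℝ := fun z =>
  if z ≤ c then -log z else if z ≤ 1 then (z - 1) ^ 2 / (2 * c * (1 - c)) else 0

noncomputable def splicedNegLogDeriv (c : ℝ) : ℝ → ℝ := fun z =>
  if z ≤ c then -z⁻¹ else if z ≤ 1 then (z - 1) / (c * (1 - c)) else 0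

section

variable {c z : ℝ}

lemma hasDerivAt_splicedNegLog (hc0 : 0 < c) (hc1 : c < 1)
    (hroot : 2 * c * log (1 / c) = 1 - c) (hz : 0 < z) :
    HasDerivAt (splicedNegLog c) (splicedNegLogDeriv c z) z := by
  have hquad (x : ℝ) : HasDerivAt (fun y => (y - 1) ^ 2 / (2 * c * (1 - c)))
      ((x - 1) / (c * (1 - c))) x :=
    (((hasDerivAt_id' x).sub_const 1).fun_pow 2).div_const _ |>.congr_deriv (by field_simp; ring)
  have hlog : -log c = (1 - c) / (2 * c) := by
    rw [one_div, log_inv] at hroot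
    field_simp
    linarith
  have hval : -log c = if c ≤ 1 then (c - 1) ^ 2 / (2 * c * (1 - c)) else 0 := by
    rw [if_pos hc1.le, hlog]
    field_simp [sub_ne_zero.2 hc1.ne']
    ring
  have hslope : -c⁻¹ = if c ≤ 1 then (c - 1) / (c * (1 - c)) else 0 := by
    rw [if_pos hc1.le, sub_one_div_mul_one_sub hc0.ne' hc1.ne]
  have hinner (x : ℝ) : HasDerivAt (fun y => if y ≤ 1 then (y - 1) ^ 2 / (2 * c * (1 - c)) else 0)
      (if x ≤ 1 then (x - 1) / (c * (1 - c)) else 0) x :=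
    hasDerivAt_ite_le (fun _ => hquad x) (fun _ => hasDerivAt_const x (0 : ℝ)) (by simp)
      (by rintro rfl; simp)
  exact hasDerivAt_ite_le (fun _ => (hasDerivAt_log hz.ne').neg) (fun _ => hinner z) hval
    (by rintro rfl; exact hslope)

lemma monotoneOn_splicedNegLogDeriv (hc0 : 0 < c) (hc1 : c < 1) :
    MonotoneOn (splicedNegLogDeriv c) (Ioi 0) := by
  have hden : 0 < c * (1 - c) := mul_pos hc0 (sub_pos.2 hc1)
  have hline : Monotone fun x : ℝ => (x - 1) / (c * (1 - c)) := fun x y hxy =>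
    div_le_div_of_nonneg_right (sub_le_sub_right hxy 1) hden.le
  refine monotoneOn_ite_le ordConnected_Ioi
    (fun x hx y hy hxy => neg_le_neg (inv_anti₀ hx.1 hxy))
    ((monotoneOn_ite_le ordConnected_Ioi (hline.monotoneOn _) monotoneOn_const (by simp)).mono
      inter_subset_left) ?_
  rw [if_pos hc1.le, sub_one_div_mul_one_sub hc0.ne' hc1.ne]

lemma splicedNegLogDeriv_nonpos (hc0 : 0 ≤ c) (hc1 : c ≤ 1) (hz : 0 ≤ z) :
    splicedNegLogDeriv c z ≤ 0 := by
  unfold splicedNegLogDeriv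
  split_ifs with hzc hz1
  · exact neg_nonpos.2 (inv_nonneg.2 hz)
  · exact div_nonpos_of_nonpos_of_nonneg (by linarith) (mul_nonneg hc0 (by linarith))
  · rfl

lemma splicedNegLog_nonneg (hc0 : 0 ≤ c) (hc1 : c ≤ 1) (hz : 0 ≤ z) :
    0 ≤ splicedNegLog c z := by
  unfold splicedNegLog
  split_ifs with hzc hz1
  · exact neg_nonneg.2 (log_nonpos hz (hzc.trans hc1))
  · exact div_nonneg (sq_nonneg _) (by nlinarith)
  · rfl

end

theorem stmt_7_general (c : ℝ) (hc : c ∈ Set.Icc (1/4 : ℝ) (1/3))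
    (hroot : 2 * c * Real.log (1 / c) = 1 - c)
    (g : ℝ → ℝ)
    (hg : g = fun z => if z ≤ c then -Real.log z
      else if z ≤ 1 then (z - 1) ^ 2 / (2 * c * (1 - c)) else 0) :
    (∀ z ∈ Set.Ioi (0 : ℝ), 0 ≤ g z) ∧
      AntitoneOn g (Set.Ioi (0 : ℝ)) ∧
      ConvexOn ℝ (Set.Ioi (0 : ℝ)) g := by
  obtain ⟨hc0, hc1⟩ : 0 < c ∧ c < 1 := ⟨by linarith [hc.1], by linarith [hc.2]⟩
  change g = splicedNegLog c at hg
  subst hg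
  have hderiv (z : ℝ) (hz : z ∈ Ioi 0) := hasDerivAt_splicedNegLog hc0 hc1 hroot hz
  exact ⟨fun z hz => splicedNegLog_nonneg hc0.le hc1.le hz.le,
    antitoneOn_of_hasDerivAt_nonpos (convex_Ioi 0) isOpen_Ioi hderiv
      fun z hz => splicedNegLogDeriv_nonpos hc0.le hc1.le (le_of_lt hz),
    (monotoneOn_splicedNegLogDeriv hc0 hc1).convexOn_of_hasDerivAt (convex_Ioi 0) isOpen_Ioi
      hderiv⟩

theorem stmt_7 (c : ℝ) (hc : c ∈ Set.Icc (1/4 : ℝ) (1/3))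
    (hroot : 2 * c * Real.log (1 / c) = 1 - c)
    (hmin : ∀ c' : ℝ, 0 < c' → 2 * c' * Real.log (1 / c') = 1 - c' → c ≤ c')
    (g : ℝ → ℝ)
    (hg : g = fun z => if z ≤ c then -Real.log z
      else if z ≤ 1 then (z - 1) ^ 2 / (2 * c * (1 - c)) else 0) :
    (∀ z ∈ Set.Ioi (0 : ℝ), 0 ≤ g z) ∧
      AntitoneOn g (Set.Ioi (0 : ℝ)) ∧
      ConvexOn ℝ (Set.Ioi (0 : ℝ)) g :=
  stmt_7_general c hc hroot g hg
end

section
/- Let g be as defined via c̄ ∈ [1/4, 1/3]: g(z) = -log z on (0, c̄], g(z) = (z-1)²/(2c̄(1-c̄)) on (c̄, 1], g(z) = 0 on [1,∞). Then for almost every r > 0 (i.e., for all r ≠ c̄, r ≠ 1), one has (1/3)·g'(r)² ≤ g''(r) and -r·g'(r) ≤ 4/3. -/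
/-! On each of the three open pieces `g` is smooth and both inequalities are elementary. On
`(0, c)` we have `g' = -1/r`, `g'' = 1/r²`; on `(1, ∞)` both vanish; on `(c, 1)`, with
`K = c(1 - c) ≥ 3/16`, we have `g' = (r - 1)/K` and `g'' = 1/K`, so the first inequality is
`(1 - r)² ≤ 3K`, true since `(1 - r)² < (1 - c)² ≤ 3c(1 - c)` for `c ≥ 1/4`, and the second is
`r(1 - r) ≤ 4K/3`, true since `r(1 - r) ≤ 1/4`. -/

open Filter Topology

lemma deriv_deriv_eq_of_eventuallyEq {g f f' : ℝ → ℝ} {r b : ℝ} (hgf : g =ᶠ[𝓝 r] f)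
    (hf : ∀ᶠ z in 𝓝 r, HasDerivAt f (f' z) z) (hf' : HasDerivAt f' b r) :
    deriv g r = f' r ∧ deriv (deriv g) r = b := by
  have hderiv : deriv g =ᶠ[𝓝 r] f' :=
    hgf.deriv.trans (hf.mono fun _ hz => hz.deriv)
  exact ⟨hderiv.eq_of_nhds, hderiv.deriv_eq.trans hf'.deriv⟩

lemma neg_log_deriv_bounds {r : ℝ} (hr : 0 < r) :
    1 / 3 * (-r⁻¹) ^ 2 ≤ (r ^ 2)⁻¹ ∧ -r * -r⁻¹ ≤ 4 / 3 := by
  rw [neg_sq, inv_pow, neg_mul_neg, mul_inv_cancel₀ hr.ne']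
  constructor
  · have : 0 ≤ (r ^ 2)⁻¹ := by positivity
    linarith
  · norm_num

lemma quadratic_deriv_bounds {c r : ℝ} (hc : 3 / 16 ≤ c * (1 - c)) (hcr : c < r) (hr : r < 1) :
    1 / 3 * ((r - 1) / (c * (1 - c))) ^ 2 ≤ 1 / (c * (1 - c)) ∧
      -r * ((r - 1) / (c * (1 - c))) ≤ 4 / 3 := by
  have hK : 0 < c * (1 - c) := by linarith
  have hc4 : 1 / 4 ≤ c := by nlinarith
  have hsq : (1 - r) ^ 2 ≤ 3 * (c * (1 - c)) := by nlinarith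
  constructor
  · rw [div_pow, ← mul_div_assoc, div_le_div_iff₀ (by positivity) hK]
    nlinarith
  · rw [← mul_div_assoc, div_le_iff₀ hK]
    nlinarith [sq_nonneg (r - 1 / 2)]

lemma hasDerivAt_sub_one_sq_div (c z : ℝ) :
    HasDerivAt (fun z => (z - 1) ^ 2 / (2 * c * (1 - c))) ((z - 1) / (c * (1 - c))) z := by
  have hsq : HasDerivAt (fun z : ℝ => (z - 1) ^ 2) (2 * (z - 1)) z := by
    simpa using ((hasDerivAt_id z).sub_const 1).fun_pow 2
  refine (hsq.div_const (2 * c * (1 - c))).congr_deriv ?_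
  rw [mul_assoc, mul_div_mul_left _ _ two_ne_zero]

theorem stmt_9_general (c : ℝ) (hc : c ∈ Set.Icc (1/4 : ℝ) (1/3))
    (g : ℝ → ℝ)
    (hg : g = fun z => if z ≤ c then -Real.log z
      else if z ≤ 1 then (z - 1) ^ 2 / (2 * c * (1 - c)) else 0) :
    ∀ r : ℝ, 0 < r → r ≠ c → r ≠ 1 →
      (1 / 3) * (deriv g r) ^ 2 ≤ deriv (deriv g) r ∧ -r * deriv g r ≤ 4 / 3 := by
  intro r hr hrc hr1
  have hK : 3 / 16 ≤ c * (1 - c) := by nlinarith [hc.1, hc.2]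
  rcases hrc.lt_or_gt with hrc | hcr
  · have hloc : ∀ᶠ z in 𝓝 r, z < c ∧ 0 < z := (gt_mem_nhds hrc).and (lt_mem_nhds hr)
    obtain ⟨hd, hdd⟩ := deriv_deriv_eq_of_eventuallyEq (g := g) (f := fun z => -Real.log z)
      (hloc.mono fun z hz => by simp [hg, hz.1.le])
      (hloc.mono fun z hz => (Real.hasDerivAt_log hz.2.ne').neg)
      (hasDerivAt_inv hr.ne').neg
    rw [hd, hdd, neg_neg]
    exact neg_log_deriv_bounds hr
  rcases hr1.lt_or_gt with hr1 | hr1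
  · have hloc : ∀ᶠ z in 𝓝 r, c < z ∧ z < 1 := (lt_mem_nhds hcr).and (gt_mem_nhds hr1)
    obtain ⟨hd, hdd⟩ := deriv_deriv_eq_of_eventuallyEq (g := g)
      (f := fun z => (z - 1) ^ 2 / (2 * c * (1 - c))) (f' := fun z => (z - 1) / (c * (1 - c)))
      (hloc.mono fun z hz => by simp [hg, hz.1.not_ge, hz.2.le])
      (Eventually.of_forall (hasDerivAt_sub_one_sq_div c))
      (((hasDerivAt_id r).sub_const 1).div_const (c * (1 - c)))
    rw [hd, hdd]
    exact quadratic_deriv_bounds hK hcr hr1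
  · have hloc : ∀ᶠ z in 𝓝 r, c < z ∧ 1 < z := (lt_mem_nhds hcr).and (lt_mem_nhds hr1)
    obtain ⟨hd, hdd⟩ := deriv_deriv_eq_of_eventuallyEq (g := g) (f := fun _ => 0) (f' := fun _ => 0)
      (hloc.mono fun z hz => by simp [hg, hz.1.not_ge, hz.2.not_ge])
      (Eventually.of_forall fun z => hasDerivAt_const z 0) (hasDerivAt_const r 0)
    rw [hd, hdd]
    norm_num

theorem stmt_9 (c : ℝ) (hc : c ∈ Set.Icc (1/4 : ℝ) (1/3))
    (hroot : 2 * c * Real.log (1 / c) = 1 - c)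
    (g : ℝ → ℝ)
    (hg : g = fun z => if z ≤ c then -Real.log z
      else if z ≤ 1 then (z - 1) ^ 2 / (2 * c * (1 - c)) else 0) :
    ∀ r : ℝ, 0 < r → r ≠ c → r ≠ 1 →
      (1 / 3) * (deriv g r) ^ 2 ≤ deriv (deriv g) r ∧ -r * deriv g r ≤ 4 / 3 :=
  stmt_9_general c hc g hg
end
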